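/- arXiv:2103.01199 — 5 statements merged into one kernel-verified Lean document; each statement's English description precedes it below -/
import Mathlib

section
/- The cut rule is admissible in the Lambek calculus L: if Π → A and Γ, A, Δ → B are derivable, then Γ, Π, Δ → B is derivable. -/
/-- Types of the Lambek calculus, built from primitive types via `\`, `/`, `·`. -/
inductive LTp : Type where
  | prim : ℕ → LTp
  | ldiv : LTp → LTp → LTp  -- `ldiv A B` is `A \ B`
  | rdiv : LTp → LTp → LTp  -- `rdiv B A` is `B / A`
  | prod : LTp → LTp → LTp  -- `prod A B` is `A · B`

/-- Derivability in the Lambek calculus `L` (Gentzen style, Lambek 1958).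
`L Γ A` means the sequent `Γ → A` is derivable. -/
inductive L : List LTp → LTp → Prop where
  | ax (p : ℕ) : L [LTp.prim p] (LTp.prim p)
  | ldiv_l (Γ Pi Δ : List LTp) (A B C : LTp) :
      Pi ≠ [] → L Pi A → L (Γ ++ B :: Δ) C → L (Γ ++ Pi ++ LTp.ldiv A B :: Δ) C
  | ldiv_r (Pi : List LTp) (A B : LTp) :
      Pi ≠ [] → L (A :: Pi) B → L Pi (LTp.ldiv A B)
  | rdiv_l (Γ Pi Δ : List LTp) (A B C : LTp) :
      Pi ≠ [] → L Pi A → L (Γ ++ B :: Δ) C → L (Γ ++ LTp.rdiv B A :: (Pi ++ Δ)) C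
  | rdiv_r (Pi : List LTp) (A B : LTp) :
      Pi ≠ [] → L (Pi ++ [A]) B → L Pi (LTp.rdiv B A)
  | prod_l (Γ Δ : List LTp) (A B C : LTp) :
      L (Γ ++ A :: B :: Δ) C → L (Γ ++ LTp.prod A B :: Δ) C
  | prod_r (Pi Psi : List LTp) (A B : LTp) :
      L Pi A → L Psi B → L (Pi ++ Psi) (LTp.prod A B)


/-- Height-indexed derivability. -/
inductive LH : ℕ → List LTp → LTp → Prop where
  | ax (n : ℕ) (p : ℕ) : LH n [LTp.prim p] (LTp.prim p)
  | ldiv_l (n : ℕ) (Γ Pi Δ : List LTp) (A B C : LTp) :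
      Pi ≠ [] → LH n Pi A → LH n (Γ ++ B :: Δ) C → LH (n+1) (Γ ++ Pi ++ LTp.ldiv A B :: Δ) C
  | ldiv_r (n : ℕ) (Pi : List LTp) (A B : LTp) :
      Pi ≠ [] → LH n (A :: Pi) B → LH (n+1) Pi (LTp.ldiv A B)
  | rdiv_l (n : ℕ) (Γ Pi Δ : List LTp) (A B C : LTp) :
      Pi ≠ [] → LH n Pi A → LH n (Γ ++ B :: Δ) C → LH (n+1) (Γ ++ LTp.rdiv B A :: (Pi ++ Δ)) C
  | rdiv_r (n : ℕ) (Pi : List LTp) (A B : LTp) :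
      Pi ≠ [] → LH n (Pi ++ [A]) B → LH (n+1) Pi (LTp.rdiv B A)
  | prod_l (n : ℕ) (Γ Δ : List LTp) (A B C : LTp) :
      LH n (Γ ++ A :: B :: Δ) C → LH (n+1) (Γ ++ LTp.prod A B :: Δ) C
  | prod_r (n : ℕ) (Pi Psi : List LTp) (A B : LTp) :
      LH n Pi A → LH n Psi B → LH (n+1) (Pi ++ Psi) (LTp.prod A B)

lemma LH.succ {n : ℕ} {Γ : List LTp} {A : LTp} (h : LH n Γ A) : LH (n+1) Γ A := by
  induction h with
  | ax n p => exact .ax (n+1) p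
  | ldiv_l n Γ Pi Δ A B C hne h1 h2 ih1 ih2 => exact .ldiv_l _ _ _ _ _ _ _ hne ih1 ih2
  | ldiv_r n Pi A B hne h1 ih1 => exact .ldiv_r _ _ _ _ hne ih1
  | rdiv_l n Γ Pi Δ A B C hne h1 h2 ih1 ih2 => exact .rdiv_l _ _ _ _ _ _ _ hne ih1 ih2
  | rdiv_r n Pi A B hne h1 ih1 => exact .rdiv_r _ _ _ _ hne ih1
  | prod_l n Γ Δ A B C h1 ih1 => exact .prod_l _ _ _ _ _ _ ih1
  | prod_r n Pi Psi A B h1 h2 ih1 ih2 => exact .prod_r _ _ _ _ _ ih1 ih2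

lemma LH.mono {n : ℕ} {Γ : List LTp} {A : LTp} (h : LH n Γ A) : ∀ m, n ≤ m → LH m Γ A := by
  intro m hm
  obtain ⟨k, rfl⟩ := Nat.exists_eq_add_of_le hm
  induction k with
  | zero => exact h
  | succ k ih => exact (ih (by omega)).succ

lemma L_of_LH {n : ℕ} {Γ : List LTp} {A : LTp} (h : LH n Γ A) : L Γ A := by
  induction h with
  | ax _ p => exact .ax p
  | ldiv_l _ _ _ _ _ _ _ hne _ _ ih1 ih2 => exact .ldiv_l _ _ _ _ _ _ hne ih1 ih2
  | ldiv_r _ _ _ _ hne _ ih1 => exact .ldiv_r _ _ _ hne ih1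
  | rdiv_l _ _ _ _ _ _ _ hne _ _ ih1 ih2 => exact .rdiv_l _ _ _ _ _ _ hne ih1 ih2
  | rdiv_r _ _ _ _ hne _ ih1 => exact .rdiv_r _ _ _ hne ih1
  | prod_l _ _ _ _ _ _ _ ih1 => exact .prod_l _ _ _ _ _ ih1
  | prod_r _ _ _ _ _ _ _ ih1 ih2 => exact .prod_r _ _ _ _ ih1 ih2

lemma LH_of_L {Γ : List LTp} {A : LTp} (h : L Γ A) : ∃ n, LH n Γ A := by
  induction h with
  | ax p => exact ⟨0, .ax 0 p⟩
  | ldiv_l Γ Pi Δ A B C hne _ _ ih1 ih2 =>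
    obtain ⟨n1, h1⟩ := ih1; obtain ⟨n2, h2⟩ := ih2
    exact ⟨max n1 n2 + 1, .ldiv_l _ _ _ _ _ _ _ hne (h1.mono _ (le_max_left _ _))
      (h2.mono _ (le_max_right _ _))⟩
  | ldiv_r Pi A B hne _ ih1 =>
    obtain ⟨n1, h1⟩ := ih1; exact ⟨n1 + 1, .ldiv_r _ _ _ _ hne h1⟩
  | rdiv_l Γ Pi Δ A B C hne _ _ ih1 ih2 =>
    obtain ⟨n1, h1⟩ := ih1; obtain ⟨n2, h2⟩ := ih2
    exact ⟨max n1 n2 + 1, .rdiv_l _ _ _ _ _ _ _ hne (h1.mono _ (le_max_left _ _))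
      (h2.mono _ (le_max_right _ _))⟩
  | rdiv_r Pi A B hne _ ih1 =>
    obtain ⟨n1, h1⟩ := ih1; exact ⟨n1 + 1, .rdiv_r _ _ _ _ hne h1⟩
  | prod_l Γ Δ A B C _ ih1 =>
    obtain ⟨n1, h1⟩ := ih1; exact ⟨n1 + 1, .prod_l _ _ _ _ _ _ h1⟩
  | prod_r Pi Psi A B _ _ ih1 ih2 =>
    obtain ⟨n1, h1⟩ := ih1; obtain ⟨n2, h2⟩ := ih2
    exact ⟨max n1 n2 + 1, .prod_r _ _ _ _ _ (h1.mono _ (le_max_left _ _))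
      (h2.mono _ (le_max_right _ _))⟩

/-- Degree of a type. -/
def LTp.deg : LTp → ℕ
  | .prim _ => 1
  | .ldiv A B => A.deg + B.deg + 1
  | .rdiv A B => A.deg + B.deg + 1
  | .prod A B => A.deg + B.deg + 1

lemma LTp.deg_pos (A : LTp) : 0 < A.deg := by cases A <;> simp [LTp.deg]

/-- Splitting a marked occurrence across an append. -/
lemma splitA {α : Type*} {Γ Δ X Y : List α} {A : α} (h : Γ ++ A :: Δ = X ++ Y) :
    (∃ m, X = Γ ++ A :: m ∧ Δ = m ++ Y) ∨ (∃ m, Γ = X ++ m ∧ Y = m ++ A :: Δ) := by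
  rcases List.append_eq_append_iff.mp h with ⟨m, h1, h2⟩ | ⟨m, h1, h2⟩
  · cases m with
    | nil => exact Or.inr ⟨[], (by simpa using h1.symm), by simpa using h2.symm⟩
    | cons x t =>
      obtain ⟨rfl, h3⟩ := List.cons.inj h2
      exact Or.inl ⟨t, h1, h3⟩
  · exact Or.inr ⟨m, h1, h2⟩

lemma LH.ne_nil {n : ℕ} {Γ : List LTp} {A : LTp} (h : LH n Γ A) : Γ ≠ [] := by
  induction h with
  | ax => simp
  | ldiv_l => simp
  | ldiv_r _ _ _ _ hne => exact hne
  | rdiv_l => simp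
  | rdiv_r _ _ _ _ hne => exact hne
  | prod_l => simp
  | prod_r _ Pi Psi _ _ _ _ ih1 => simp [ih1]

lemma mid_ne_nil {α : Type*} {X Pi Y : List α} (h : Pi ≠ []) : X ++ Pi ++ Y ≠ [] := by
  simp [h]

theorem cut_aux : ∀ (a h : ℕ) (A : LTp) (n m : ℕ) (Pi Γ Δ : List LTp) (B : LTp),
    A.deg ≤ a → n + m ≤ h → Pi ≠ [] → LH n Pi A → LH m (Γ ++ A :: Δ) B →
    L (Γ ++ Pi ++ Δ) B := by
  intro a
  induction a with
  | zero =>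
    intro h A n m Pi Γ Δ B hd
    exact absurd hd (by have := A.deg_pos; omega)
  | succ a iha =>
    intro h
    induction h using Nat.strong_induction_on with
    | _ h ihh =>
    intro A n m Pi Γ Δ B hd hh hPi d1 d2
    have cutH : ∀ n' m' (Pi' Γ' Δ' : List LTp) (B' : LTp), n' + m' < n + m → Pi' ≠ [] →
        LH n' Pi' A → LH m' (Γ' ++ A :: Δ') B' → L (Γ' ++ Pi' ++ Δ') B' :=
      fun n' m' Pi' Γ' Δ' B' hlt => ihh (n' + m') (by omega) A n' m' Pi' Γ' Δ' B' hd le_rfl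
    have cutS : ∀ (A' : LTp) (n' m' : ℕ) (Pi' Γ' Δ' : List LTp) (B' : LTp), A'.deg ≤ a →
        Pi' ≠ [] → LH n' Pi' A' → LH m' (Γ' ++ A' :: Δ') B' → L (Γ' ++ Pi' ++ Δ') B' :=
      fun A' n' m' Pi' Γ' Δ' B' hd' => iha (n' + m') A' n' m' Pi' Γ' Δ' B' hd' le_rfl
    have cutL : ∀ (A' : LTp) (Pi' Γ' Δ' : List LTp) (B' : LTp), A'.deg ≤ a →
        Pi' ≠ [] → L Pi' A' → L (Γ' ++ A' :: Δ') B' → L (Γ' ++ Pi' ++ Δ') B' := by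
      intro A' Pi' Γ' Δ' B' hd' hne' p q
      obtain ⟨n', p⟩ := LH_of_L p
      obtain ⟨m', q⟩ := LH_of_L q
      exact cutS A' n' m' Pi' Γ' Δ' B' hd' hne' p q
    obtain ⟨Θ, hE⟩ : ∃ Θ, Γ ++ A :: Δ = Θ := ⟨_, rfl⟩
    rw [hE] at d2
    cases d2 with
    | ax m p =>
      -- hE : Γ ++ A :: Δ = [prim p]
      rcases Γ with _ | ⟨x, Γ'⟩
      · simp at hE
        obtain ⟨rfl, rfl⟩ := hE
        simpa using L_of_LH d1
      · simp at hE
    | ldiv_l m' Γ₂ Pi₂ Δ₂ A₂ B₂ C hne e₁ e₂ =>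
      rcases splitA (show Γ ++ A :: Δ = Γ₂ ++ (Pi₂ ++ LTp.ldiv A₂ B₂ :: Δ₂)
          by simpa [List.append_assoc] using hE) with ⟨m₀, rfl, rfl⟩ | ⟨m₀, rfl, h2⟩
      · -- A inside Γ₂
        have hc := cutH n m' Pi Γ (m₀ ++ B₂ :: Δ₂) B (by omega) hPi d1
          (by simpa [List.append_assoc] using e₂)
        have := L.ldiv_l (Γ ++ Pi ++ m₀) Pi₂ Δ₂ A₂ B₂ B hne (L_of_LH e₁)
          (by simpa [List.append_assoc] using hc)
        simpa [List.append_assoc] using this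
      · rcases splitA h2.symm with ⟨m₁, rfl, rfl⟩ | ⟨m₁, rfl, h3⟩
        · -- A inside Pi₂
          have hc := cutH n m' Pi m₀ m₁ A₂ (by omega) hPi d1 e₁
          have := L.ldiv_l Γ₂ (m₀ ++ Pi ++ m₁) Δ₂ A₂ B₂ B (mid_ne_nil hPi) hc (L_of_LH e₂)
          simpa [List.append_assoc] using this
        · cases m₁ with
          | nil =>
            -- principal: A = ldiv A₂ B₂
            obtain ⟨rfl, rfl⟩ : LTp.ldiv A₂ B₂ = A ∧ Δ₂ = Δ := by simpa using h3
            have hdA : A₂.deg ≤ a := by have := B₂.deg_pos; simp [LTp.deg] at hd; omega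
            have hdB : B₂.deg ≤ a := by have := A₂.deg_pos; simp [LTp.deg] at hd; omega
            have d2' : LH (m' + 1) ((Γ₂ ++ Pi₂) ++ LTp.ldiv A₂ B₂ :: Δ₂) B := by
              have := LH.ldiv_l m' Γ₂ Pi₂ Δ₂ A₂ B₂ B hne e₁ e₂
              simpa [List.append_assoc] using this
            cases d1 with
            | ldiv_r n' _ _ _ hne1 f =>
              have c1 : L (Pi₂ ++ Pi) B₂ := cutS A₂ m' n' Pi₂ [] Pi B₂ hdA hne e₁ f
              have c2 := cutL B₂ (Pi₂ ++ Pi) Γ₂ Δ₂ B hdB (by simp [LH.ne_nil e₁]) c1 (L_of_LH e₂)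
              simpa [List.append_assoc] using c2
            | ldiv_l n' Γ₁ Pi₁ Δ₁ A₁ B₁ _ hne1 g₁ g₂ =>
              have hc := cutH n' (m' + 1) (Γ₁ ++ B₁ :: Δ₁) (Γ₂ ++ Pi₂) Δ₂ B (by omega)
                (by simp) g₂ d2'
              have := L.ldiv_l ((Γ₂ ++ Pi₂) ++ Γ₁) Pi₁ (Δ₁ ++ Δ₂) A₁ B₁ B hne1 (L_of_LH g₁)
                (by simpa [List.append_assoc] using hc)
              simpa [List.append_assoc] using this
            | rdiv_l n' Γ₁ Pi₁ Δ₁ A₁ B₁ _ hne1 g₁ g₂ =>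
              have hc := cutH n' (m' + 1) (Γ₁ ++ B₁ :: Δ₁) (Γ₂ ++ Pi₂) Δ₂ B (by omega)
                (by simp) g₂ d2'
              have := L.rdiv_l ((Γ₂ ++ Pi₂) ++ Γ₁) Pi₁ (Δ₁ ++ Δ₂) A₁ B₁ B hne1 (L_of_LH g₁)
                (by simpa [List.append_assoc] using hc)
              simpa [List.append_assoc] using this
            | prod_l n' Γ₁ Δ₁ A₁ B₁ _ g =>
              have hc := cutH n' (m' + 1) (Γ₁ ++ A₁ :: B₁ :: Δ₁) (Γ₂ ++ Pi₂) Δ₂ B (by omega)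
                (by simp) g d2'
              have := L.prod_l ((Γ₂ ++ Pi₂) ++ Γ₁) (Δ₁ ++ Δ₂) A₁ B₁ B
                (by simpa [List.append_assoc] using hc)
              simpa [List.append_assoc] using this
          | cons x m₂ =>
            -- A inside Δ₂
            obtain ⟨rfl, rfl⟩ : LTp.ldiv A₂ B₂ = x ∧ Δ₂ = m₂ ++ A :: Δ := by simpa using h3
            have hc := cutH n m' Pi (Γ₂ ++ B₂ :: m₂) Δ B (by omega) hPi d1
              (by simpa [List.append_assoc] using e₂)
            have := L.ldiv_l Γ₂ Pi₂ (m₂ ++ Pi ++ Δ) A₂ B₂ B hne (L_of_LH e₁)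
              (by simpa [List.append_assoc] using hc)
            simpa [List.append_assoc] using this
    | rdiv_l m' Γ₂ Pi₂ Δ₂ A₂ B₂ C hne e₁ e₂ =>
      rcases splitA (show Γ ++ A :: Δ = Γ₂ ++ (LTp.rdiv B₂ A₂ :: (Pi₂ ++ Δ₂))
          by simpa [List.append_assoc] using hE) with ⟨m₀, rfl, rfl⟩ | ⟨m₀, rfl, h2⟩
      · -- A inside Γ₂
        have hc := cutH n m' Pi Γ (m₀ ++ B₂ :: Δ₂) B (by omega) hPi d1
          (by simpa [List.append_assoc] using e₂)
        have := L.rdiv_l (Γ ++ Pi ++ m₀) Pi₂ Δ₂ A₂ B₂ B hne (L_of_LH e₁)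
          (by simpa [List.append_assoc] using hc)
        simpa [List.append_assoc] using this
      · cases m₀ with
        | nil =>
          -- principal: A = rdiv B₂ A₂
          obtain ⟨rfl, rfl⟩ : LTp.rdiv B₂ A₂ = A ∧ Pi₂ ++ Δ₂ = Δ := by simpa using h2
          have hdA : A₂.deg ≤ a := by have := B₂.deg_pos; simp [LTp.deg] at hd; omega
          have hdB : B₂.deg ≤ a := by have := A₂.deg_pos; simp [LTp.deg] at hd; omega
          have d2' : LH (m' + 1) (Γ₂ ++ LTp.rdiv B₂ A₂ :: (Pi₂ ++ Δ₂)) B :=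
            LH.rdiv_l m' Γ₂ Pi₂ Δ₂ A₂ B₂ B hne e₁ e₂
          cases d1 with
          | rdiv_r n' _ _ _ hne1 f =>
            have c1 : L (Pi ++ Pi₂) B₂ := by
              have := cutS A₂ m' n' Pi₂ Pi [] B₂ hdA hne e₁ f
              simpa using this
            have c2 := cutL B₂ (Pi ++ Pi₂) Γ₂ Δ₂ B hdB (by simp [hne1]) c1 (L_of_LH e₂)
            simpa [List.append_assoc] using c2
          | ldiv_l n' Γ₁ Pi₁ Δ₁ A₁ B₁ _ hne1 g₁ g₂ =>
            have hc := cutH n' (m' + 1) (Γ₁ ++ B₁ :: Δ₁) Γ₂ (Pi₂ ++ Δ₂) B (by omega)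
              (by simp) g₂ d2'
            have := L.ldiv_l (Γ₂ ++ Γ₁) Pi₁ (Δ₁ ++ (Pi₂ ++ Δ₂)) A₁ B₁ B hne1
              (L_of_LH g₁) (by simpa [List.append_assoc] using hc)
            simpa [List.append_assoc] using this
          | rdiv_l n' Γ₁ Pi₁ Δ₁ A₁ B₁ _ hne1 g₁ g₂ =>
            have hc := cutH n' (m' + 1) (Γ₁ ++ B₁ :: Δ₁) Γ₂ (Pi₂ ++ Δ₂) B (by omega)
              (by simp) g₂ d2'
            have := L.rdiv_l (Γ₂ ++ Γ₁) Pi₁ (Δ₁ ++ (Pi₂ ++ Δ₂)) A₁ B₁ B hne1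
              (L_of_LH g₁) (by simpa [List.append_assoc] using hc)
            simpa [List.append_assoc] using this
          | prod_l n' Γ₁ Δ₁ A₁ B₁ _ g =>
            have hc := cutH n' (m' + 1) (Γ₁ ++ A₁ :: B₁ :: Δ₁) Γ₂ (Pi₂ ++ Δ₂) B
              (by omega) (by simp) g d2'
            have := L.prod_l (Γ₂ ++ Γ₁) (Δ₁ ++ (Pi₂ ++ Δ₂)) A₁ B₁ B
              (by simpa [List.append_assoc] using hc)
            simpa [List.append_assoc] using this
        | cons x m₂ =>
          obtain ⟨rfl, h3⟩ : LTp.rdiv B₂ A₂ = x ∧ Pi₂ ++ Δ₂ = m₂ ++ A :: Δ := by simpa using h2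
          rcases splitA h3.symm with ⟨m₃, rfl, rfl⟩ | ⟨m₃, rfl, h4⟩
          · -- A inside Pi₂
            have hc := cutH n m' Pi m₂ m₃ A₂ (by omega) hPi d1 e₁
            have := L.rdiv_l Γ₂ (m₂ ++ Pi ++ m₃) Δ₂ A₂ B₂ B (mid_ne_nil hPi) hc (L_of_LH e₂)
            simpa [List.append_assoc] using this
          · -- A inside Δ₂
            obtain rfl := h4
            have hc := cutH n m' Pi (Γ₂ ++ B₂ :: m₃) Δ B (by omega) hPi d1
              (by simpa [List.append_assoc] using e₂)
            have := L.rdiv_l Γ₂ Pi₂ (m₃ ++ Pi ++ Δ) A₂ B₂ B hne (L_of_LH e₁)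
              (by simpa [List.append_assoc] using hc)
            simpa [List.append_assoc] using this
    | prod_l m' Γ₂ Δ₂ A₂ B₂ C e =>
      rcases splitA (show Γ ++ A :: Δ = Γ₂ ++ (LTp.prod A₂ B₂ :: Δ₂)
          by simpa [List.append_assoc] using hE) with ⟨m₀, rfl, rfl⟩ | ⟨m₀, rfl, h2⟩
      · -- A inside Γ₂
        have hc := cutH n m' Pi Γ (m₀ ++ A₂ :: B₂ :: Δ₂) B (by omega) hPi d1
          (by simpa [List.append_assoc] using e)
        have := L.prod_l (Γ ++ Pi ++ m₀) Δ₂ A₂ B₂ B (by simpa [List.append_assoc] using hc)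
        simpa [List.append_assoc] using this
      · cases m₀ with
        | nil =>
          -- principal: A = prod A₂ B₂
          obtain ⟨rfl, rfl⟩ : LTp.prod A₂ B₂ = A ∧ Δ₂ = Δ := by simpa using h2
          have hdA : A₂.deg ≤ a := by have := B₂.deg_pos; simp [LTp.deg] at hd; omega
          have hdB : B₂.deg ≤ a := by have := A₂.deg_pos; simp [LTp.deg] at hd; omega
          have d2' : LH (m' + 1) (Γ₂ ++ LTp.prod A₂ B₂ :: Δ₂) B :=
            LH.prod_l m' Γ₂ Δ₂ A₂ B₂ B e
          cases d1 with
          | prod_r n' Pi₁ Psi₁ _ _ f₁ f₂ =>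
            have c1 : L ((Γ₂ ++ [A₂]) ++ Psi₁ ++ Δ₂) B :=
              cutS B₂ n' m' Psi₁ (Γ₂ ++ [A₂]) Δ₂ B hdB f₂.ne_nil f₂
                (by simpa [List.append_assoc] using e)
            have c2 := cutL A₂ Pi₁ Γ₂ (Psi₁ ++ Δ₂) B hdA f₁.ne_nil (L_of_LH f₁)
              (by simpa [List.append_assoc] using c1)
            simpa [List.append_assoc] using c2
          | ldiv_l n' Γ₁ Pi₁ Δ₁ A₁ B₁ _ hne1 g₁ g₂ =>
            have hc := cutH n' (m' + 1) (Γ₁ ++ B₁ :: Δ₁) Γ₂ Δ₂ B (by omega)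
              (by simp) g₂ d2'
            have := L.ldiv_l (Γ₂ ++ Γ₁) Pi₁ (Δ₁ ++ Δ₂) A₁ B₁ B hne1 (L_of_LH g₁)
              (by simpa [List.append_assoc] using hc)
            simpa [List.append_assoc] using this
          | rdiv_l n' Γ₁ Pi₁ Δ₁ A₁ B₁ _ hne1 g₁ g₂ =>
            have hc := cutH n' (m' + 1) (Γ₁ ++ B₁ :: Δ₁) Γ₂ Δ₂ B (by omega)
              (by simp) g₂ d2'
            have := L.rdiv_l (Γ₂ ++ Γ₁) Pi₁ (Δ₁ ++ Δ₂) A₁ B₁ B hne1 (L_of_LH g₁)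
              (by simpa [List.append_assoc] using hc)
            simpa [List.append_assoc] using this
          | prod_l n' Γ₁ Δ₁ A₁ B₁ _ g =>
            have hc := cutH n' (m' + 1) (Γ₁ ++ A₁ :: B₁ :: Δ₁) Γ₂ Δ₂ B (by omega)
              (by simp) g d2'
            have := L.prod_l (Γ₂ ++ Γ₁) (Δ₁ ++ Δ₂) A₁ B₁ B
              (by simpa [List.append_assoc] using hc)
            simpa [List.append_assoc] using this
        | cons x m₂ =>
          -- A inside Δ₂
          obtain ⟨rfl, rfl⟩ : LTp.prod A₂ B₂ = x ∧ Δ₂ = m₂ ++ A :: Δ := by simpa using h2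
          have hc := cutH n m' Pi (Γ₂ ++ A₂ :: B₂ :: m₂) Δ B (by omega) hPi d1
            (by simpa [List.append_assoc] using e)
          have := L.prod_l Γ₂ (m₂ ++ Pi ++ Δ) A₂ B₂ B
            (by simpa [List.append_assoc] using hc)
          simpa [List.append_assoc] using this
    | ldiv_r m' Pi₂ A₂ B₂ hne f =>
      obtain rfl := hE
      have hc := cutH n m' Pi (A₂ :: Γ) Δ B₂ (by omega) hPi d1
        (by simpa [List.append_assoc] using f)
      exact L.ldiv_r _ _ _ (mid_ne_nil hPi) (by simpa [List.append_assoc] using hc)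
    | rdiv_r m' Pi₂ A₂ B₂ hne f =>
      obtain rfl := hE
      have hc := cutH n m' Pi Γ (Δ ++ [A₂]) B₂ (by omega) hPi d1
        (by simpa [List.append_assoc] using f)
      exact L.rdiv_r _ _ _ (mid_ne_nil hPi) (by simpa [List.append_assoc] using hc)
    | prod_r m' Pi₂ Psi₂ A₂ B₂ f₁ f₂ =>
      rcases splitA hE with ⟨m₀, rfl, rfl⟩ | ⟨m₀, rfl, rfl⟩
      · -- A inside Pi₂
        have hc := cutH n m' Pi Γ m₀ A₂ (by omega) hPi d1 f₁
        have := L.prod_r (Γ ++ Pi ++ m₀) Psi₂ A₂ B₂ hc (L_of_LH f₂)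
        simpa [List.append_assoc] using this
      · -- A inside Psi₂
        have hc := cutH n m' Pi m₀ Δ B₂ (by omega) hPi d1 f₂
        have := L.prod_r Pi₂ (m₀ ++ Pi ++ Δ) A₂ B₂ (L_of_LH f₁) hc
        simpa [List.append_assoc] using this


/-- Admissibility of the cut rule in the Lambek calculus `L`:
if `Pi → A` and `Γ, A, Δ → B` are derivable, then `Γ, Pi, Δ → B` is derivable. -/
theorem L_cut_admissible (Pi Γ Δ : List LTp) (A B : LTp) (hPi : Pi ≠ [])
    (h₁ : L Pi A) (h₂ : L (Γ ++ A :: Δ) B) : L (Γ ++ Pi ++ Δ) B := by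
  obtain ⟨n, d1⟩ := LH_of_L h₁
  obtain ⟨m, d2⟩ := LH_of_L h₂
  exact cut_aux A.deg (n + m) A n m Pi Γ Δ B le_rfl le_rfl hPi d1 d2
end

section
/- If a derivable sequent of the Lambek calculus L is translated into first-order intuitionistic logic by interpreting each type as a binary-predicate formula (primitive p as p(x,y); A/B at (x,y) as ∀z (v(B)(y,z) → v(A)(x,z)); B\A at (x,y) as ∀z (v(B)(z,x) → v(A)(z,y)); A·B at (x,y) as ∃z (v(A)(x,z) ∧ v(B)(z,y)); and a sequent A₁,…,Aₙ → C as the universal closure of ∃-chained conjunction of the v(Aᵢ) along fresh intermediate variables implying v(C) on the endpoints), then the resulting first-order formula is intuitionistically valid. -/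
/-- A Kripke model for first-order intuitionistic logic with binary predicate symbols
(one binary predicate for each primitive Lambek type), with growing domains. -/
structure Kripke (U : Type) where
  W : Type
  le : W → W → Prop
  le_refl : ∀ w, le w w
  le_trans : ∀ {a b c}, le a b → le b c → le a c
  D : W → Set U
  D_mono : ∀ {w w'}, le w w' → D w ⊆ D w'
  I : ℕ → W → U → U → Prop
  I_mono : ∀ (p : ℕ) {w w'} (a b : U), le w w' → I p w a b → I p w' a b

/-- Kripke forcing of the intuitionistic translation `v(A)(x,y)` of a Lambek type:
`v(p)(x,y) = p(x,y)`, `v(A/B)(x,y) = ∀z (v(B)(y,z) → v(A)(x,z))`,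
`v(B\A)(x,y) = ∀z (v(B)(z,x) → v(A)(z,y))`,
`v(A·B)(x,y) = ∃z (v(A)(x,z) ∧ v(B)(z,y))`. -/
def force {U : Type} (M : Kripke U) : LTp → M.W → U → U → Prop
  | LTp.prim p, w, x, y => M.I p w x y
  | LTp.ldiv A B, w, x, y =>  -- `A \ B` at `(x,y)`: ∀z (v(A)(z,x) → v(B)(z,y))
      ∀ w', M.le w w' → ∀ z ∈ M.D w', force M A w' z x → force M B w' z y
  | LTp.rdiv B A, w, x, y =>  -- `B / A` at `(x,y)`: ∀z (v(A)(y,z) → v(B)(x,z))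
      ∀ w', M.le w w' → ∀ z ∈ M.D w', force M A w' y z → force M B w' x z
  | LTp.prod A B, w, x, y => ∃ z ∈ M.D w, force M A w x z ∧ force M B w z y

/-- Forcing of the ∃-chained conjunction `∃x₁…∃x_{n-1} (v(A₁)(x₀,x₁) ∧ … ∧ v(Aₙ)(x_{n-1},xₙ))`. -/
def chain {U : Type} (M : Kripke U) : List LTp → M.W → U → U → Prop
  | [], _, x, y => x = y
  | [A], w, x, y => force M A w x y
  | A :: B :: Γ, w, x, y => ∃ z ∈ M.D w, force M A w x z ∧ chain M (B :: Γ) w z y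

lemma force_mono {U : Type} (M : Kripke U) (A : LTp) {w w' : M.W} (h : M.le w w')
    {x y : U} : force M A w x y → force M A w' x y := by
  induction A generalizing w w' x y with
  | prim p => exact M.I_mono p x y h
  | ldiv A B ihA ihB =>
      intro hf w'' h'' z hz ha
      exact hf w'' (M.le_trans h h'') z hz ha
  | rdiv B A ihB ihA =>
      intro hf w'' h'' z hz ha
      exact hf w'' (M.le_trans h h'') z hz ha
  | prod A B ihA ihB =>
      rintro ⟨z, hz, ha, hb⟩
      exact ⟨z, M.D_mono h hz, ihA h ha, ihB h hb⟩

lemma chain_mono {U : Type} (M : Kripke U) {w w' : M.W} (h : M.le w w')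
    (Γ : List LTp) {x y : U} : chain M Γ w x y → chain M Γ w' x y := by
  induction Γ generalizing x with
  | nil => exact id
  | cons A l ih =>
    cases l with
    | nil => exact force_mono M A h
    | cons B l' =>
      rintro ⟨z, hz, ha, hc⟩
      exact ⟨z, M.D_mono h hz, force_mono M A h ha, ih hc⟩

lemma chain_cons {U : Type} (M : Kripke U) (A : LTp) (l : List LTp) {w : M.W}
    {x y : U} (hy : y ∈ M.D w) :
    chain M (A :: l) w x y ↔ ∃ z ∈ M.D w, force M A w x z ∧ chain M l w z y := by
  cases l with
  | nil =>
    constructor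
    · intro hf; exact ⟨y, hy, hf, rfl⟩
    · rintro ⟨z, _, hf, rfl⟩; exact hf
  | cons B l' => exact Iff.rfl

lemma chain_split {U : Type} (M : Kripke U) (Γ Δ : List LTp) {w : M.W} {x y : U}
    (hx : x ∈ M.D w) (hy : y ∈ M.D w) :
    chain M (Γ ++ Δ) w x y ↔ ∃ z ∈ M.D w, chain M Γ w x z ∧ chain M Δ w z y := by
  induction Γ generalizing x with
  | nil =>
    simp only [List.nil_append]
    constructor
    · intro hc; exact ⟨x, hx, rfl, hc⟩
    · rintro ⟨z, _, rfl, hc⟩; exact hc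
  | cons A Γ ih =>
    rw [List.cons_append, chain_cons M A (Γ ++ Δ) hy]
    constructor
    · rintro ⟨u, hu, hf, hc⟩
      obtain ⟨z, hz, h1, h2⟩ := (ih hu).mp hc
      exact ⟨z, hz, (chain_cons M A Γ hz).mpr ⟨u, hu, hf, h1⟩, h2⟩
    · rintro ⟨z, hz, h1, h2⟩
      obtain ⟨u, hu, hf, hc⟩ := (chain_cons M A Γ hz).mp h1
      exact ⟨u, hu, hf, (ih hu).mpr ⟨z, hz, hc, h2⟩⟩

/-- Soundness of the intuitionistic translation of the Lambek calculus: if `Γ → C` is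
derivable in `L`, then the translated first-order formula
`∀x₀∀xₙ (∃x₁…∃x_{n-1} (v(A₁)(x₀,x₁) ∧ … ∧ v(Aₙ)(x_{n-1},xₙ)) → v(C)(x₀,xₙ))`
is intuitionistically valid, i.e. forced at every world of every Kripke model. -/
theorem L_translation_intuitionistically_valid (Γ : List LTp) (C : LTp) (h : L Γ C) :
    ∀ (U : Type) (M : Kripke U) (w : M.W), ∀ x ∈ M.D w, ∀ y ∈ M.D w,
      chain M Γ w x y → force M C w x y := by
  induction h with
  | ax p => intro U M w x hx y hy hc; exact hc
  | ldiv_l Γ Pi Δ A B C hne h1 h2 ih1 ih2 =>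
    intro U M w x hx y hy hc
    rw [List.append_assoc, chain_split M Γ _ hx hy] at hc
    obtain ⟨u, hu, hΓ, hc⟩ := hc
    rw [chain_split M Pi _ hu hy] at hc
    obtain ⟨v, hv, hPi, hc⟩ := hc
    rw [chain_cons M _ Δ hy] at hc
    obtain ⟨t, ht, hf, hΔ⟩ := hc
    have hA := ih1 U M w u hu v hv hPi
    have hB := hf w (M.le_refl w) u hu hA
    apply ih2 U M w x hx y hy
    rw [chain_split M Γ _ hx hy]
    exact ⟨u, hu, hΓ, (chain_cons M B Δ hy).mpr ⟨t, ht, hB, hΔ⟩⟩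
  | ldiv_r Pi A B hne h1 ih =>
    intro U M w x hx y hy hc
    intro w' hle z hz hA
    apply ih U M w' z hz y (M.D_mono hle hy)
    exact (chain_cons M A Pi (M.D_mono hle hy)).mpr
      ⟨x, M.D_mono hle hx, hA, chain_mono M hle Pi hc⟩
  | rdiv_l Γ Pi Δ A B C hne h1 h2 ih1 ih2 =>
    intro U M w x hx y hy hc
    rw [chain_split M Γ _ hx hy] at hc
    obtain ⟨u, hu, hΓ, hc⟩ := hc
    rw [chain_cons M _ _ hy] at hc
    obtain ⟨t, ht, hf, hc⟩ := hc
    rw [chain_split M Pi Δ ht hy] at hc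
    obtain ⟨v, hv, hPi, hΔ⟩ := hc
    have hA := ih1 U M w t ht v hv hPi
    have hB := hf w (M.le_refl w) v hv hA
    apply ih2 U M w x hx y hy
    rw [chain_split M Γ _ hx hy]
    exact ⟨u, hu, hΓ, (chain_cons M B Δ hy).mpr ⟨v, hv, hB, hΔ⟩⟩
  | rdiv_r Pi A B hne h1 ih =>
    intro U M w x hx y hy hc
    intro w' hle z hz hA
    apply ih U M w' x (M.D_mono hle hx) z hz
    rw [chain_split M Pi [A] (M.D_mono hle hx) hz]
    exact ⟨y, M.D_mono hle hy, chain_mono M hle Pi hc, hA⟩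
  | prod_l Γ Δ A B C h1 ih =>
    intro U M w x hx y hy hc
    rw [chain_split M Γ _ hx hy] at hc
    obtain ⟨u, hu, hΓ, hc⟩ := hc
    rw [chain_cons M _ Δ hy] at hc
    obtain ⟨t, ht, hf, hΔ⟩ := hc
    obtain ⟨z, hz, hA, hB⟩ := hf
    apply ih U M w x hx y hy
    rw [chain_split M Γ _ hx hy]
    refine ⟨u, hu, hΓ, ?_⟩
    rw [chain_cons M A _ hy]
    exact ⟨z, hz, hA, (chain_cons M B Δ hy).mpr ⟨t, ht, hB, hΔ⟩⟩
  | prod_r Pi Psi A B h1 h2 ih1 ih2 =>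
    intro U M w x hx y hy hc
    rw [chain_split M Pi Psi hx hy] at hc
    obtain ⟨z, hz, hP, hQ⟩ := hc
    exact ⟨z, hz, ih1 U M w x hx z hz hP, ih2 U M w z hz y hy hQ⟩
end

section
/- The intuitionistic translation of Lambek sequents is not complete: the formula ∀x (p(x) → p(x) ∧ p(x)) is intuitionistically valid, but the corresponding sequent p → p·p (under a translation where the product is interpreted as plain conjunction at the same point, i.e. v(p·p)(x) = p(x) ∧ p(x)) is not derivable in the Lambek calculus with permutation LP. -/
/-- Derivability in the Lambek calculus with permutation `LP`:
the rules of `L` together with the permutation rule. -/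
inductive LP : List LTp → LTp → Prop where
  | ax (p : ℕ) : LP [LTp.prim p] (LTp.prim p)
  | ldiv_l (Γ Pi Δ : List LTp) (A B C : LTp) :
      Pi ≠ [] → LP Pi A → LP (Γ ++ B :: Δ) C → LP (Γ ++ Pi ++ LTp.ldiv A B :: Δ) C
  | ldiv_r (Pi : List LTp) (A B : LTp) :
      Pi ≠ [] → LP (A :: Pi) B → LP Pi (LTp.ldiv A B)
  | rdiv_l (Γ Pi Δ : List LTp) (A B C : LTp) :
      Pi ≠ [] → LP Pi A → LP (Γ ++ B :: Δ) C → LP (Γ ++ LTp.rdiv B A :: (Pi ++ Δ)) C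
  | rdiv_r (Pi : List LTp) (A B : LTp) :
      Pi ≠ [] → LP (Pi ++ [A]) B → LP Pi (LTp.rdiv B A)
  | prod_l (Γ Δ : List LTp) (A B C : LTp) :
      LP (Γ ++ A :: B :: Δ) C → LP (Γ ++ LTp.prod A B :: Δ) C
  | prod_r (Pi Psi : List LTp) (A B : LTp) :
      LP Pi A → LP Psi B → LP (Pi ++ Psi) (LTp.prod A B)
  | perm (Γ Δ : List LTp) (A B C : LTp) :
      LP (Γ ++ B :: A :: Δ) C → LP (Γ ++ A :: B :: Δ) C


/-- A Kripke model for first-order intuitionistic logic with one unary predicate `P`. -/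
structure Kripke1 (U : Type) where
  W : Type
  le : W → W → Prop
  le_refl : ∀ w, le w w
  le_trans : ∀ {a b c}, le a b → le b c → le a c
  D : W → Set U
  D_mono : ∀ {w w'}, le w w' → D w ⊆ D w'
  P : W → U → Prop
  P_mono : ∀ {w w'} (a : U), le w w' → P w a → P w' a

/-- Weight invariant for LP. -/
def LTp.wt : LTp → ℤ
  | LTp.prim _ => 1
  | LTp.ldiv A B => B.wt - A.wt
  | LTp.rdiv B A => B.wt - A.wt
  | LTp.prod A B => A.wt + B.wt

lemma LP.wt_eq {Γ : List LTp} {C : LTp} (h : LP Γ C) :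
    (Γ.map LTp.wt).sum = C.wt := by
  induction h with
  | ax p => simp [LTp.wt]
  | ldiv_l Γ Pi Δ A B C _ _ _ ih1 ih2 =>
      simp only [List.map_append, List.map_cons, List.sum_append, List.sum_cons,
        LTp.wt] at *
      omega
  | ldiv_r Pi A B _ _ ih =>
      simp only [List.map_cons, List.sum_cons, LTp.wt] at *; omega
  | rdiv_l Γ Pi Δ A B C _ _ _ ih1 ih2 =>
      simp only [List.map_append, List.map_cons, List.sum_append, List.sum_cons,
        LTp.wt] at *
      omega
  | rdiv_r Pi A B _ _ ih =>
      simp only [List.map_append, List.map_cons, List.sum_append, List.sum_cons,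
        List.map_nil, List.sum_nil, LTp.wt] at *
      omega
  | prod_l Γ Δ A B C _ ih =>
      simp only [List.map_append, List.map_cons, List.sum_append, List.sum_cons,
        LTp.wt] at *
      omega
  | prod_r Pi Psi A B _ _ ih1 ih2 =>
      simp only [List.map_append, List.sum_append, LTp.wt] at *; omega
  | perm Γ Δ A B C _ ih =>
      simp only [List.map_append, List.map_cons, List.sum_append, List.sum_cons] at *
      omega

/-- Incompleteness of the intuitionistic translation: the formula
`∀x (p(x) → p(x) ∧ p(x))` is intuitionistically valid (forced at every world of every
Kripke model), but the corresponding sequent `p → p·p` is not derivable in `LP`. -/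
theorem translation_not_complete :
    (∀ (U : Type) (M : Kripke1 U) (w : M.W), ∀ x ∈ M.D w,
        ∀ w', M.le w w' → (M.P w' x → M.P w' x ∧ M.P w' x)) ∧
    (∀ p : ℕ, ¬ LP [LTp.prim p] (LTp.prod (LTp.prim p) (LTp.prim p))) := by
  refine ⟨fun U M w x _ w1 _ h => ⟨h, h⟩, fun p h => ?_⟩
  have := h.wt_eq
  simp [LTp.wt] at this
end

section
/- Hyperedge replacement satisfies the sequentialization/associativity property: if e₀ is an edge of G with type(e₀) = type(H), and f₀ is an edge of H with type(f₀) = type(K), then G[e₀/H][f₀/K] = G[e₀/H[f₀/K]] (up to isomorphism). -/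
universe u

/-- A hypergraph over a set of labels `α`: a set of nodes `V`, a set of hyperedges `E`,
an attachment function `att` assigning a sequence of attachment nodes to each edge,
a labeling function `lab`, and a sequence `ext` of external nodes. -/
structure HG (α : Type u) where
  V : Type
  E : Type
  att : E → List V
  lab : E → α
  ext : List V

namespace HG

variable {α : Type u}

/-- `type(G)` is the number of external nodes of `G`. -/
def type (G : HG α) : ℕ := G.ext.length

/-- Well-formedness of a hypergraph with respect to an arity function `ar` on labels:
attachment sequences are repetition-free and match the arity of the label, and the
sequence of external nodes is repetition-free. -/
def Wf (ar : α → ℕ) (G : HG α) : Prop :=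
  (∀ e, (G.att e).Nodup) ∧ (∀ e, (G.att e).length = ar (G.lab e)) ∧ G.ext.Nodup

/-- Hyperedge replacement `G[e₀/H]` (defined when `type(e₀) = type(H)`): remove `e₀`,
insert a disjoint copy of `H`, and fuse the `i`-th external node of `H` with the
`i`-th attachment node of `e₀`. -/
noncomputable def repl (G : HG α) (e₀ : G.E) (H : HG α)
    (h : (G.att e₀).length = H.ext.length) : HG α where
  V := G.V ⊕ {v : H.V // v ∉ H.ext}
  E := {e : G.E // e ≠ e₀} ⊕ H.E
  att := fun e =>
    match e with
    | Sum.inl e => (G.att e.1).map Sum.inl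
    | Sum.inr e => (H.att e).map fun v =>
        letI : DecidableEq H.V := Classical.decEq _
        if hv : v ∈ H.ext then
          Sum.inl ((G.att e₀).get ⟨H.ext.idxOf v, by
            rw [h]; exact List.idxOf_lt_length_iff.mpr hv⟩)
        else Sum.inr ⟨v, hv⟩
  lab := fun e =>
    match e with
    | Sum.inl e => G.lab e.1
    | Sum.inr e => H.lab e
  ext := G.ext.map Sum.inl

/-- Isomorphism of hypergraphs: a pair of bijections on nodes and edges commuting with
attachment, labeling and the external nodes. -/
def Iso (G H : HG α) : Prop :=
  ∃ (fV : G.V ≃ H.V) (fE : G.E ≃ H.E),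
    (∀ e, H.att (fE e) = (G.att e).map fV) ∧
    (∀ e, H.lab (fE e) = G.lab e) ∧
    H.ext = G.ext.map fV

end HG

theorem indexOf_map' {β γ : Type*} [DecidableEq β] [DecidableEq γ] {f : β → γ}
    (hf : Function.Injective f) (l : List β) (a : β) :
    (l.map f).idxOf (f a) = l.idxOf a := by
  induction l with
  | nil => rfl
  | cons b l ih =>
    by_cases hb : b = a
    · subst hb; simp [List.idxOf_cons_self]
    · rw [List.map_cons, List.idxOf_cons_ne _ (fun h => hb (hf h)),
        List.idxOf_cons_ne _ hb, ih]

def seqVIso (GV HV KV : Type) (hext : List HV) (kext : List KV) :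
    ((GV ⊕ {v : HV // v ∉ hext}) ⊕ {w : KV // w ∉ kext}) ≃
    (GV ⊕ {v : HV ⊕ {w : KV // w ∉ kext} // v ∉ hext.map Sum.inl}) where
  toFun := fun v => match v with
    | .inl (.inl g) => .inl g
    | .inl (.inr ⟨v, hv⟩) => .inr ⟨.inl v, by simpa using hv⟩
    | .inr w => .inr ⟨.inr w, by simp⟩
  invFun := fun v => match v with
    | .inl g => .inl (.inl g)
    | .inr ⟨.inl v, hv⟩ => .inl (.inr ⟨v, by simpa using hv⟩)
    | .inr ⟨.inr w, _⟩ => .inr w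
  left_inv := by rintro ((g | ⟨v, hv⟩) | w) <;> rfl
  right_inv := by rintro (g | ⟨(v | w), hv⟩) <;> rfl

def seqEIso (GE HE KE : Type) (e₀ : GE) (f₀ : HE) :
    ({e : ({e : GE // e ≠ e₀} ⊕ HE) // e ≠ Sum.inr f₀} ⊕ KE) ≃
    ({e : GE // e ≠ e₀} ⊕ ({e : HE // e ≠ f₀} ⊕ KE)) where
  toFun := fun e => match e with
    | .inl ⟨.inl g, _⟩ => .inl g
    | .inl ⟨.inr h, hh⟩ => .inr (.inl ⟨h, by rintro rfl; exact hh rfl⟩)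
    | .inr k => .inr (.inr k)
  invFun := fun e => match e with
    | .inl g => .inl ⟨.inl g, by simp⟩
    | .inr (.inl ⟨h, hh⟩) => .inl ⟨.inr h, by simpa using hh⟩
    | .inr (.inr k) => .inr k
  left_inv := by rintro (⟨(g | h), he⟩ | k) <;> rfl
  right_inv := by rintro (g | (⟨h, hh⟩ | k)) <;> rfl

/-- Sequentialization/associativity of hyperedge replacement:
if `e₀` is an edge of `G` with `type(e₀) = type(H)` and `f₀` is an edge of `H` with
`type(f₀) = type(K)`, then `G[e₀/H][f₀/K] = G[e₀/H[f₀/K]]` up to isomorphism.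
(In `G[e₀/H]`, the edge of the copy of `H` corresponding to `f₀` is `Sum.inr f₀`.) -/
theorem repl_sequentialization {α : Type u} (ar : α → ℕ) (G H K : HG α)
    (hG : G.Wf ar) (hH : H.Wf ar) (hK : K.Wf ar)
    (e₀ : G.E) (f₀ : H.E)
    (h₁ : (G.att e₀).length = H.ext.length)
    (h₂ : (H.att f₀).length = K.ext.length) :
    HG.Iso ((G.repl e₀ H h₁).repl (Sum.inr f₀) K (by simpa [HG.repl] using h₂))
      (G.repl e₀ (H.repl f₀ K h₂) (by simpa [HG.repl] using h₁)) := by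
  refine ⟨seqVIso G.V H.V K.V H.ext K.ext, seqEIso G.E H.E K.E e₀ f₀, ?_, ?_, ?_⟩
  · rintro (⟨(⟨g, hg⟩ | h), he⟩ | k)
    · simp only [seqEIso, seqVIso, Equiv.coe_fn_mk, HG.repl, List.map_map]
      refine (List.map_congr_left ?_).symm
      intro v _; rfl
    · simp only [seqEIso, seqVIso, Equiv.coe_fn_mk, HG.repl, List.map_map]
      show List.map _ (List.map _ (H.att h)) = _
      rw [List.map_map]
      refine (List.map_congr_left ?_).symm
      intro v _
      simp only [Function.comp_apply, List.get_eq_getElem, List.getElem_map]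
      by_cases hv : v ∈ H.ext
      · rw [dif_pos hv, dif_pos (List.mem_map_of_mem (f := Sum.inl) hv)]
        letI : DecidableEq H.V := Classical.decEq _
        letI : DecidableEq (H.V ⊕ {w : K.V // w ∉ K.ext}) := Classical.decEq _
        have hidx := indexOf_map' (f := @Sum.inl H.V {w : K.V // w ∉ K.ext})
          Sum.inl_injective H.ext v
        simp only [hidx]; rfl
      · rw [dif_neg hv, dif_neg (by simpa using hv)]; rfl
    · simp only [seqEIso, seqVIso, Equiv.coe_fn_mk, HG.repl, List.map_map]
      show List.map _ (List.map _ (K.att k)) = _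
      rw [List.map_map]
      refine (List.map_congr_left ?_).symm
      intro w _
      simp only [Function.comp_apply, List.get_eq_getElem, List.getElem_map]
      by_cases hw : w ∈ K.ext
      · rw [dif_pos hw, dif_pos hw]
        letI : DecidableEq K.V := Classical.decEq _
        have hlt : K.ext.idxOf w < (H.att f₀).length := by
          rw [h₂]; exact List.idxOf_lt_length_iff.mpr hw
        by_cases hv : (H.att f₀)[K.ext.idxOf w]'hlt ∈ H.ext
        · rw [dif_pos hv, dif_pos (List.mem_map_of_mem (f := Sum.inl) hv)]
          letI : DecidableEq H.V := Classical.decEq _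
          letI : DecidableEq (H.V ⊕ {w : K.V // w ∉ K.ext}) := Classical.decEq _
          have hidx := indexOf_map' (f := @Sum.inl H.V {w : K.V // w ∉ K.ext})
            Sum.inl_injective H.ext ((H.att f₀)[K.ext.idxOf w]'hlt)
          simp only [hidx]; rfl
        · rw [dif_neg hv, dif_neg (by simpa using hv)]; rfl
      · rw [dif_neg hw, dif_neg hw]
        rw [dif_neg (by simp)]; rfl
  · rintro (⟨(⟨g, hg⟩ | h), he⟩ | k) <;> rfl
  · simp only [seqVIso, Equiv.coe_fn_mk, HG.repl, List.map_map]
    refine (List.map_congr_left ?_).symm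
    intro v _; rfl
end

section
/- Hyperedge replacement satisfies the parallelization/confluence property: if e₁ and e₂ are distinct edges of G with type(eᵢ) = type(Hᵢ), then replacing e₁ by H₁ and then e₂ by H₂ yields the same hypergraph (up to isomorphism) as replacing e₂ by H₂ and then e₁ by H₁. -/
universe u

/-- Parallelization/confluence of hyperedge replacement: if `e₁` and `e₂` are distinct
edges of `G` with `type(eᵢ) = type(Hᵢ)`, then replacing `e₁` by `H₁` and then (the edge
corresponding to) `e₂` by `H₂` yields, up to isomorphism, the same hypergraph as
replacing `e₂` by `H₂` and then `e₁` by `H₁`. -/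
theorem repl_parallelization {α : Type u} (ar : α → ℕ) (G H₁ H₂ : HG α)
    (hG : G.Wf ar) (hH₁ : H₁.Wf ar) (hH₂ : H₂.Wf ar)
    (e₁ e₂ : G.E) (hne : e₁ ≠ e₂)
    (h₁ : (G.att e₁).length = H₁.ext.length)
    (h₂ : (G.att e₂).length = H₂.ext.length) :
    HG.Iso
      ((G.repl e₁ H₁ h₁).repl (Sum.inl ⟨e₂, Ne.symm hne⟩) H₂ (by simpa [HG.repl] using h₂))
      ((G.repl e₂ H₂ h₂).repl (Sum.inl ⟨e₁, hne⟩) H₁ (by simpa [HG.repl] using h₁)) := by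
  classical
  -- node bijection
  refine ⟨⟨fun v =>
      match v with
      | .inl (.inl g) => .inl (.inl g)
      | .inl (.inr a) => .inr a
      | .inr b => .inl (.inr b),
    fun v =>
      match v with
      | .inl (.inl g) => .inl (.inl g)
      | .inl (.inr b) => .inr b
      | .inr a => .inl (.inr a),
    ?_, ?_⟩,
    ⟨fun e =>
      match e with
      | .inl ⟨.inl ⟨e, he1⟩, hne2⟩ =>
          .inl ⟨.inl ⟨e, fun h => hne2 (by subst h; rfl)⟩,
            fun h => he1 (by cases h; rfl)⟩
      | .inl ⟨.inr f₁, _⟩ => .inr f₁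
      | .inr f₂ => .inl ⟨.inr f₂, fun h => by cases h⟩,
    fun e =>
      match e with
      | .inl ⟨.inl ⟨e, he2⟩, hne1⟩ =>
          .inl ⟨.inl ⟨e, fun h => hne1 (by subst h; rfl)⟩,
            fun h => he2 (by cases h; rfl)⟩
      | .inl ⟨.inr f₂, _⟩ => .inr f₂
      | .inr f₁ => .inl ⟨.inr f₁, fun h => by cases h⟩,
    ?_, ?_⟩, ?_, ?_, ?_⟩
  · rintro (⟨g | a⟩ | b) <;> rfl
  · rintro (⟨g | b⟩ | a) <;> rfl
  · intro e
    cases e with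
    | inr f₂ => rfl
    | inl e' =>
      obtain ⟨e', hne'⟩ := e'
      cases e' with
      | inr f₁ => rfl
      | inl e'' => rfl
  · intro e
    cases e with
    | inr f₁ => rfl
    | inl e' =>
      obtain ⟨e', hne'⟩ := e'
      cases e' with
      | inr f₂ => rfl
      | inl e'' => rfl
  · intro e
    cases e with
    | inr f₂ =>
      simp only [HG.repl, List.map_map]
      show List.map _ (List.map _ _) = _
      rw [List.map_map]
      refine List.map_congr_left fun v _ => ?_
      by_cases hv : v ∈ H₂.ext <;> simp [hv] <;> rfl
    | inl e' =>
      obtain ⟨e', hne'⟩ := e'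
      cases e' with
      | inr f₁ =>
        simp only [HG.repl, List.map_map]
        refine List.map_congr_left fun v _ => ?_
        by_cases hv : v ∈ H₁.ext <;> simp [hv] <;> rfl
      | inl e'' =>
        show List.map Sum.inl (List.map Sum.inl (G.att e''.1)) =
          List.map _ (List.map Sum.inl (List.map Sum.inl (G.att e''.1)))
        simp only [List.map_map]; refine Eq.trans ?_ List.map_map.symm
        exact List.map_congr_left fun _ _ => rfl
  · intro e
    cases e with
    | inr f₂ => rfl
    | inl e' =>
      obtain ⟨e', hne'⟩ := e'
      cases e' with
      | inr f₁ => rfl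
      | inl e'' => rfl
  · simp [HG.repl, List.map_map]
    intro a _; rfl
end
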